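/- arXiv:math/0412058 — 5 statements merged into one kernel-verified Lean document; each statement's English description precedes it below -/
import Mathlib

section
/- Let (Ω, η, ξ) be a projective triple of rational 1-forms on ℂ² and let g, h ∈ K with g ≠ 0. Then the modified triple Ω' = g·Ω, η' = η + dg/g + h·Ω (componentwise η' = η + ((∂x g)/g, (∂y g)/g) + h·Ω), ξ' = (1/g)·(ξ − dh − h·η − (h²/2)·Ω) is again a projective triple. -/
/-!
The modification is a shift by `h`, `(Ω, η + hΩ, ξ - dh - hη - (h²/2)Ω)`, followed by a rescaling
by `g`, `(gΩ, η + dg/g, ξ/g)`. Each of the two preserves the structure equations by the Leibniz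
rule `d(fω) = df ∧ ω + f dω` together with `d(df) = 0`. The latter says that `∂x` and `∂y` commute,
which holds on `ℂ[x,y]` and passes to `ℂ(x,y)` since a derivation vanishing on a domain vanishes
on its fraction field.
-/

open MvPolynomial

noncomputable section

/-- The field of rational functions `ℂ(x,y)`. -/
abbrev RatF : Type := FractionRing (MvPolynomial (Fin 2) ℂ)

/-- Wedge product of two rational 1-forms: `ω ∧ θ = ω₁ θ₂ - ω₂ θ₁`. -/
def wedge (ω θ : RatF × RatF) : RatF := ω.1 * θ.2 - ω.2 * θ.1

/-- Exterior derivative of a rational 1-form: `dω = ∂x ω₂ - ∂y ω₁`. -/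
def extd (dx dy : Derivation ℂ RatF RatF) (ω : RatF × RatF) : RatF := dx ω.2 - dy ω.1

/-- Differential of a rational function: `dF = (∂x F, ∂y F)`. -/
def d0 (dx dy : Derivation ℂ RatF RatF) (F : RatF) : RatF × RatF := (dx F, dy F)

/-- The derivations `dx`, `dy` extend the partial derivatives on `ℂ[x,y]`. -/
def ExtendsPartials (dx dy : Derivation ℂ RatF RatF) : Prop :=
  (∀ p : MvPolynomial (Fin 2) ℂ,
      dx (algebraMap (MvPolynomial (Fin 2) ℂ) RatF p)
        = algebraMap (MvPolynomial (Fin 2) ℂ) RatF (pderiv 0 p)) ∧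
  (∀ p : MvPolynomial (Fin 2) ℂ,
      dy (algebraMap (MvPolynomial (Fin 2) ℂ) RatF p)
        = algebraMap (MvPolynomial (Fin 2) ℂ) RatF (pderiv 1 p))

/-- `(Ω, η, ξ)` is a projective triple: (Proj.1) `dΩ = η∧Ω`, (Proj.2) `dη = Ω∧ξ`,
(Proj.3) `dξ = ξ∧η`. -/
def IsProjTriple (dx dy : Derivation ℂ RatF RatF) (Ω η ξ : RatF × RatF) : Prop :=
  extd dx dy Ω = wedge η Ω ∧ extd dx dy η = wedge Ω ξ ∧ extd dx dy ξ = wedge ξ η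

theorem MvPolynomial.pderiv_comm {σ R : Type*} [CommRing R] (i j : σ) (p : MvPolynomial σ R) :
    pderiv i (pderiv j p) = pderiv j (pderiv i p) := by
  suffices h : ⁅pderiv i, pderiv j⁆ = (0 : Derivation R (MvPolynomial σ R) (MvPolynomial σ R)) by
    rw [← sub_eq_zero, ← Derivation.commutator_apply, h, Derivation.zero_apply]
  refine derivation_ext fun k => ?_
  classical
  simp only [Derivation.commutator_apply, pderiv_X, Pi.single_apply, Derivation.zero_apply]
  split_ifs <;> simp

theorem IsLocalization.derivation_eq_zero {R A S N : Type*} [CommSemiring R] [CommRing A]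
    [CommRing S] [Algebra R S] [Algebra A S] (M : Submonoid A) [IsLocalization M S]
    [AddCommGroup N] [Module R N] [Module S N] [IsScalarTower R S N] (D : Derivation R S N)
    (hD : ∀ a, D (algebraMap A S a) = 0) : D = 0 := by
  ext z
  obtain ⟨⟨p, q⟩, hz⟩ := IsLocalization.surj M z
  have hq : IsUnit (algebraMap A S q) := IsLocalization.map_units S q
  have := congrArg D hz
  rw [D.leibniz, hD, hD, smul_zero, zero_add] at this
  exact (hq.smul_eq_zero).mp this

theorem ExtendsPartials.commutator_eq_zero {dx dy : Derivation ℂ RatF RatF}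
    (hext : ExtendsPartials dx dy) : ⁅dx, dy⁆ = 0 :=
  IsLocalization.derivation_eq_zero (nonZeroDivisors _) _ fun p => by
    rw [Derivation.commutator_apply, hext.2, hext.1, hext.1, hext.2, pderiv_comm, sub_self]

section Forms

variable (ω θ χ : RatF × RatF) (f : RatF)

theorem wedge_self : wedge ω ω = 0 := by
  simp only [wedge, mul_comm, sub_self]

theorem wedge_anticomm : wedge ω θ = -wedge θ ω := by
  simp only [wedge]; ring

theorem wedge_add_left : wedge (ω + θ) χ = wedge ω χ + wedge θ χ := by
  simp only [wedge, Prod.fst_add, Prod.snd_add]; ring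

theorem wedge_add_right : wedge ω (θ + χ) = wedge ω θ + wedge ω χ := by
  simp only [wedge, Prod.fst_add, Prod.snd_add]; ring

theorem wedge_sub_left : wedge (ω - θ) χ = wedge ω χ - wedge θ χ := by
  simp only [wedge, Prod.fst_sub, Prod.snd_sub]; ring

theorem wedge_sub_right : wedge ω (θ - χ) = wedge ω θ - wedge ω χ := by
  simp only [wedge, Prod.fst_sub, Prod.snd_sub]; ring

theorem wedge_smul_left : wedge (f • ω) θ = f * wedge ω θ := by
  simp only [wedge, Prod.smul_fst, Prod.smul_snd, smul_eq_mul]; ring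

theorem wedge_smul_right : wedge ω (f • θ) = f * wedge ω θ := by
  simp only [wedge, Prod.smul_fst, Prod.smul_snd, smul_eq_mul]; ring

theorem extd_d0 {dx dy : Derivation ℂ RatF RatF} (hcomm : ⁅dx, dy⁆ = 0) (F : RatF) :
    extd dx dy (d0 dx dy F) = 0 := by
  rw [extd, d0, ← Derivation.commutator_apply, hcomm, Derivation.zero_apply]

variable (dx dy : Derivation ℂ RatF RatF)

theorem extd_add : extd dx dy (ω + θ) = extd dx dy ω + extd dx dy θ := by
  simp only [extd, Prod.fst_add, Prod.snd_add, map_add]; ring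

theorem extd_sub : extd dx dy (ω - θ) = extd dx dy ω - extd dx dy θ := by
  simp only [extd, Prod.fst_sub, Prod.snd_sub, map_sub]; ring

theorem extd_smul : extd dx dy (f • ω) = wedge (d0 dx dy f) ω + f * extd dx dy ω := by
  simp only [extd, wedge, d0, Prod.smul_fst, Prod.smul_snd, smul_eq_mul, Derivation.leibniz]; ring

theorem d0_inv : d0 dx dy f⁻¹ = -f⁻¹ ^ 2 • d0 dx dy f := by
  simp only [d0, Derivation.leibniz_inv, Prod.smul_mk]

theorem d0_sq_div_two : d0 dx dy (f ^ 2 / 2) = f • d0 dx dy f := by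
  have map_two (D : Derivation ℂ RatF RatF) : D 2 = 0 := by
    simpa using D.map_natCast 2
  simp only [d0, Derivation.leibniz_div_const _ _ _ (map_two _), Derivation.leibniz_pow, Prod.smul_mk]
  ext <;> simp

end Forms

section Gauge

variable {dx dy : Derivation ℂ RatF RatF} {Ω η ξ : RatF × RatF}

theorem IsProjTriple.shift (hcomm : ⁅dx, dy⁆ = 0) (hT : IsProjTriple dx dy Ω η ξ) (h : RatF) :
    IsProjTriple dx dy Ω (η + h • Ω) (ξ - d0 dx dy h - h • η - (h ^ 2 / 2) • Ω) := by
  obtain ⟨h1, h2, h3⟩ := hT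
  refine ⟨?_, ?_, ?_⟩ <;>
    simp only [extd_add, extd_sub, extd_smul, extd_d0 hcomm, d0_sq_div_two, wedge_add_left,
      wedge_add_right, wedge_sub_left, wedge_sub_right, wedge_smul_left, wedge_smul_right,
      wedge_self, h1, h2, h3]
  · ring
  · rw [wedge_anticomm Ω (d0 dx dy h), wedge_anticomm Ω η]
    ring
  · rw [wedge_anticomm Ω ξ, wedge_anticomm Ω η]
    ring

theorem IsProjTriple.scale (hcomm : ⁅dx, dy⁆ = 0) (hT : IsProjTriple dx dy Ω η ξ) {g : RatF}
    (hg : g ≠ 0) : IsProjTriple dx dy (g • Ω) (η + g⁻¹ • d0 dx dy g) (g⁻¹ • ξ) := by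
  obtain ⟨h1, h2, h3⟩ := hT
  refine ⟨?_, ?_, ?_⟩ <;>
    simp only [extd_add, extd_smul, extd_d0 hcomm, d0_inv, wedge_add_left, wedge_add_right,
      wedge_smul_left, wedge_smul_right, wedge_self, h1, h2, h3]
  · field_simp
    ring
  · field_simp
    ring
  · rw [wedge_anticomm ξ (d0 dx dy g)]
    ring

end Gauge

/-- Modification of a projective triple: for `g ≠ 0` and `h`, the triple
`Ω' = g Ω`, `η' = η + dg/g + h Ω`, `ξ' = (1/g)(ξ - dh - h η - (h²/2) Ω)`
is again a projective triple. -/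
theorem projTriple_modification (dx dy : Derivation ℂ RatF RatF)
    (hext : ExtendsPartials dx dy) (Ω η ξ : RatF × RatF)
    (h : IsProjTriple dx dy Ω η ξ) (g h' : RatF) (hg : g ≠ 0) :
    IsProjTriple dx dy (g • Ω) (η + (dx g / g, dy g / g) + h' • Ω)
      (g⁻¹ • (ξ - d0 dx dy h' - h' • η - (h' ^ 2 / 2) • Ω)) := by
  have hcomm := hext.commutator_eq_zero
  have hdlog : ((dx g / g, dy g / g) : RatF × RatF) = g⁻¹ • d0 dx dy g := by
    simp only [d0, Prod.smul_mk, smul_eq_mul, div_eq_inv_mul]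
  rw [hdlog, add_right_comm]
  exact (h.shift hcomm h').scale hcomm hg
end
end

section
/- Let a, b, c, p ∈ ℂ[x] be polynomials in the first variable only, viewed in K = ℂ(x,y), with p ≠ 0, and write p' = ∂x p. Consider the Riccati 1-form Ω := (−(y²·c − y·b − a), p), i.e. Ω = p dy − (y²c − yb − a)dx, and the 1-forms η := ((p'+b)/p + 2a/(y·p), 2/y) and ξ := (−2a/(y²·p²), 0). Then (Ω, η, ξ) is a projective triple. -/
/-!
Only a few facts about `∂x`, `∂y` enter the verification: `∂x y = 0`, `∂y y = 1`, and `∂y`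
kills `a, b, c, p` and `p'`, since these are polynomials in `x` alone. Granted these, each of
(Proj.1)–(Proj.3) is an identity of rational functions in `y` with coefficients `a, b, c, p, p'`.
-/

open MvPolynomial

noncomputable section

/-- The image in `K = ℂ(x,y)` of a polynomial in the first variable only. -/
def ofPolyX (q : Polynomial ℂ) : RatF :=
  algebraMap (MvPolynomial (Fin 2) ℂ) RatF (Polynomial.aeval (X 0 : MvPolynomial (Fin 2) ℂ) q)

/-- The image of the variable `y` in `K = ℂ(x,y)`. -/
def yK : RatF := algebraMap (MvPolynomial (Fin 2) ℂ) RatF (X 1)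

theorem isProjTriple_riccati (dx dy : Derivation ℂ RatF RatF) {y A B C P : RatF}
    (hy : y ≠ 0) (hP : P ≠ 0) (hdx_y : dx y = 0) (hdy_y : dy y = 1)
    (hdy_A : dy A = 0) (hdy_B : dy B = 0) (hdy_C : dy C = 0) (hdy_P : dy P = 0)
    (hdy_dx_P : dy (dx P) = 0) :
    IsProjTriple dx dy (-(y ^ 2 * C - y * B - A), P)
      ((dx P + B) / P + 2 * A / (y * P), 2 / y) (-(2 * A) / (y ^ 2 * P ^ 2), 0) := by
  have hdx_two : dx (2 : RatF) = 0 := by exact_mod_cast dx.map_natCast 2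
  have hdy_two : dy (2 : RatF) = 0 := by exact_mod_cast dy.map_natCast 2
  refine ⟨?_, ?_, ?_⟩ <;>
  · simp only [extd, wedge, hdx_y, hdy_y, hdy_A, hdy_B, hdy_C, hdy_P, hdy_dx_P, hdx_two, hdy_two,
      map_add, map_sub, map_neg, map_zero, Derivation.leibniz, Derivation.leibniz_div,
      Derivation.leibniz_pow, smul_eq_mul]
    field_simp
    ring

theorem ofPolyX_ne_zero {q : Polynomial ℂ} (hq : q ≠ 0) : ofPolyX q ≠ 0 :=
  IsFractionRing.to_map_ne_zero_of_mem_nonZeroDivisors (K := RatF) <|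
    mem_nonZeroDivisors_of_ne_zero <|
      (map_ne_zero_iff _ (Polynomial.toMvPolynomial_injective (R := ℂ) (0 : Fin 2))).mpr hq

theorem yK_ne_zero : yK ≠ 0 :=
  IsFractionRing.to_map_ne_zero_of_mem_nonZeroDivisors (K := RatF) <|
    mem_nonZeroDivisors_of_ne_zero (X_ne_zero 1)

namespace ExtendsPartials

variable {dx dy : Derivation ℂ RatF RatF}

theorem dx_ofPolyX (hext : ExtendsPartials dx dy) (q : Polynomial ℂ) :
    dx (ofPolyX q) = ofPolyX (Polynomial.derivative q) := by
  rw [ofPolyX, hext.1, Derivation.map_aeval, pderiv_X_self, smul_eq_mul, mul_one]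
  rfl

theorem dy_ofPolyX (hext : ExtendsPartials dx dy) (q : Polynomial ℂ) : dy (ofPolyX q) = 0 := by
  rw [ofPolyX, hext.2, Derivation.map_aeval, pderiv_X_of_ne (by decide), smul_zero, map_zero]

theorem dx_yK (hext : ExtendsPartials dx dy) : dx yK = 0 := by
  rw [yK, hext.1, pderiv_X_of_ne (by decide), map_zero]

theorem dy_yK (hext : ExtendsPartials dx dy) : dy yK = 1 := by
  rw [yK, hext.2, pderiv_X_self, map_one]

end ExtendsPartials

/-- The Riccati 1-form `Ω = p dy - (y²c - yb - a) dx` together with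
`η = ((p'+b)/p + 2a/(yp)) dx + (2/y) dy` and `ξ = (-2a/(y²p²)) dx` is a projective triple. -/
theorem riccati_projTriple (dx dy : Derivation ℂ RatF RatF)
    (hext : ExtendsPartials dx dy) (a b c p : Polynomial ℂ) (hp : p ≠ 0) :
    letI A : RatF := ofPolyX a
    letI B : RatF := ofPolyX b
    letI C : RatF := ofPolyX c
    letI P : RatF := ofPolyX p
    letI Ω : RatF × RatF := (-(yK ^ 2 * C - yK * B - A), P)
    letI η : RatF × RatF := ((dx P + B) / P + 2 * A / (yK * P), 2 / yK)
    letI ξ : RatF × RatF := (-(2 * A) / (yK ^ 2 * P ^ 2), 0)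
    IsProjTriple dx dy Ω η ξ := by
  have hdy_dx_P : dy (dx (ofPolyX p)) = 0 := by rw [hext.dx_ofPolyX, hext.dy_ofPolyX]
  exact isProjTriple_riccati dx dy yK_ne_zero (ofPolyX_ne_zero hp) hext.dx_yK hext.dy_yK
    (hext.dy_ofPolyX a) (hext.dy_ofPolyX b) (hext.dy_ofPolyX c) (hext.dy_ofPolyX p) hdy_dx_P
end
end

section
/- Let s : ℂ → ℂ be meromorphic at 0. Then the following are equivalent: (i) there exists a function r : ℂ → ℂ analytic at 0 with r(0) ≠ 0 such that deriv r z = s z · r z for all z ≠ 0 in some neighborhood of 0; (ii) the order of s at 0 is nonnegative (i.e. s agrees, on a punctured neighborhood of 0, with a function analytic at 0). In other words, the differential equation r'/r = s has a holomorphic non-vanishing solution near 0 exactly when s has no pole at 0. -/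
open Filter

open scoped Topology

/-! Near a non-zero value, `r' = s r` says that `s = r'/r` is the logarithmic derivative of `r`,
which is analytic; so `s` has no pole. Conversely, if `s` has no pole it agrees off `0` with an
analytic `g`, and `r = exp F` for a local primitive `F` of `g` (Morera on a small disk) solves
the equation. -/

lemma AnalyticAt.exists_analyticAt_hasDerivAt {E : Type*} [NormedAddCommGroup E]
    [NormedSpace ℂ E] [CompleteSpace E] {f : ℂ → E} {c : ℂ} (hf : AnalyticAt ℂ f c) :
    ∃ F : ℂ → E, AnalyticAt ℂ F c ∧ ∀ᶠ z in 𝓝 c, HasDerivAt F (f z) z := by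
  obtain ⟨ε, hε, hfε⟩ := hf.exists_ball_analyticOnNhd
  obtain ⟨F, hF⟩ := hfε.differentiableOn.isExactOn_ball
  have hball : Metric.ball c ε ∈ 𝓝 c := Metric.ball_mem_nhds c hε
  refine ⟨F, ?_, mem_of_superset hball hF⟩
  exact DifferentiableOn.analyticAt (fun z hz => (hF z hz).differentiableAt.differentiableWithinAt)
    hball

lemma AnalyticAt.exists_analyticAt_ne_zero_deriv_eq_mul {g : ℂ → ℂ} {c : ℂ}
    (hg : AnalyticAt ℂ g c) :
    ∃ r : ℂ → ℂ, AnalyticAt ℂ r c ∧ r c ≠ 0 ∧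
      ∀ᶠ z in 𝓝 c, deriv r z = g z * r z := by
  obtain ⟨F, hF, hFg⟩ := hg.exists_analyticAt_hasDerivAt
  refine ⟨fun z => Complex.exp (F z), analyticAt_cexp.comp hF, Complex.exp_ne_zero _, ?_⟩
  filter_upwards [hFg] with z hz
  rw [hz.cexp.deriv, mul_comm]

lemma AnalyticAt.logDeriv {r : ℂ → ℂ} {c : ℂ} (hr : AnalyticAt ℂ r c) (hrc : r c ≠ 0) :
    AnalyticAt ℂ (logDeriv r) c :=
  hr.deriv.div hr hrc

lemma eventuallyEq_logDeriv_of_deriv_eq_mul {r s : ℂ → ℂ} {c : ℂ} (hr : ContinuousAt r c)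
    (hrc : r c ≠ 0) (h : ∀ᶠ z in 𝓝[≠] c, deriv r z = s z * r z) :
    s =ᶠ[𝓝[≠] c] logDeriv r := by
  filter_upwards [h, (hr.eventually_ne hrc).filter_mono nhdsWithin_le_nhds] with z hz hrz
  rw [logDeriv_apply, hz, mul_div_cancel_right₀ _ hrz]

/-- The equation `r' = s·r` has a solution `r` analytic and non-vanishing at `0`
if and only if the meromorphic function `s` has nonnegative order at `0`,
i.e. no pole at `0`. -/
theorem riccati_log_deriv_solvable_iff_no_pole (s : ℂ → ℂ) (hs : MeromorphicAt s 0) :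
    (∃ r : ℂ → ℂ, AnalyticAt ℂ r 0 ∧ r 0 ≠ 0 ∧
        ∀ᶠ z in nhdsWithin (0 : ℂ) {(0 : ℂ)}ᶜ, deriv r z = s z * r z) ↔
      0 ≤ meromorphicOrderAt s 0 := by
  constructor
  · rintro ⟨r, hr, hr0, hrs⟩
    rw [meromorphicOrderAt_congr (eventuallyEq_logDeriv_of_deriv_eq_mul hr.continuousAt hr0 hrs)]
    exact (hr.logDeriv hr0).meromorphicOrderAt_nonneg
  · intro hord
    have hg : AnalyticAt ℂ (toMeromorphicNFAt s 0) 0 :=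
      hs.meromorphicOrderAt_nonneg_iff_analyticAt_toMeromorphicNFAt.mp hord
    obtain ⟨r, hr, hr0, hrg⟩ := hg.exists_analyticAt_ne_zero_deriv_eq_mul
    refine ⟨r, hr, hr0, ?_⟩
    filter_upwards [hrg.filter_mono nhdsWithin_le_nhds, hs.eq_nhdsNE_toMeromorphicNFAt]
      with z hz hsz
    rw [hz, hsz]
end

section
/- Let m ≥ 1 be a natural number, a ∈ ℂ, and let r : ℂ → ℂ be meromorphic at 0 and not identically zero on any punctured neighborhood of 0. If z^{m+1} · (deriv r z) = a · r z for all z in some punctured neighborhood of 0, then a = 0. (Equivalently: the function exp(−a/(m z^m)) is not meromorphic at 0 unless a = 0.) -/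
/-!
The logarithmic derivative of a meromorphic function has at worst a simple pole. Dividing the
equation by `r` gives `z ^ (m + 1) * logDeriv r z = a`, whose left side therefore has order at
least `m ≥ 1` at `0`, while a nonzero constant has order `0`.
-/

open Filter Topology

theorem neg_one_le_meromorphicOrderAt_logDeriv {𝕜 : Type*} [NontriviallyNormedField 𝕜]
    [CompleteSpace 𝕜] [CharZero 𝕜] {f : 𝕜 → 𝕜} {x : 𝕜} (hf : MeromorphicAt f x) :
    -1 ≤ meromorphicOrderAt (logDeriv f) x := by
  by_cases h_top : meromorphicOrderAt f x = ⊤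
  · have hlog : logDeriv f =ᶠ[𝓝[≠] x] 0 := by
      simpa using logDeriv_congr_nhdsNE (meromorphicOrderAt_eq_top_iff.mp h_top)
    rw [meromorphicOrderAt_congr hlog, meromorphicOrderAt_eq_top_iff.mpr (by simp)]
    exact le_top
  by_cases h_zero : meromorphicOrderAt f x = 0
  · exact le_trans (by decide) (meromorphicOrderAt_logDeriv_nonneg hf h_zero)
  · exact (meromorphicOrderAt_logDeriv_eq_neg_one hf h_zero h_top).ge

/-- If `r` is meromorphic at `0`, not eventually zero near `0`, and satisfies
`z^(m+1) r'(z) = a r(z)` on a punctured neighborhood of `0` (with `m ≥ 1`),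
then `a = 0`: the function `exp(-a/(m z^m))` is not meromorphic at `0` unless `a = 0`. -/
theorem pole_order_ge_two_no_meromorphic_solution (m : ℕ) (hm : 1 ≤ m) (a : ℂ)
    (r : ℂ → ℂ) (hr : MeromorphicAt r 0)
    (hr0 : ¬ (∀ᶠ z in nhdsWithin (0 : ℂ) {(0 : ℂ)}ᶜ, r z = 0))
    (heq : ∀ᶠ z in nhdsWithin (0 : ℂ) {(0 : ℂ)}ᶜ, z ^ (m + 1) * deriv r z = a * r z) :
    a = 0 := by
  by_contra ha
  have hr_ne : ∀ᶠ z in 𝓝[≠] 0, r z ≠ 0 :=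
    hr.eventually_eq_zero_or_eventually_ne_zero.resolve_left hr0
  have hlog : (fun z ↦ z ^ (m + 1) * logDeriv r z) =ᶠ[𝓝[≠] 0] fun _ ↦ a := by
    filter_upwards [heq, hr_ne] with z hz hrz
    rw [logDeriv_apply, ← mul_div_assoc, hz, mul_div_cancel_right₀ _ hrz]
  have h_order : ((m + 1 : ℕ) : WithTop ℤ) + meromorphicOrderAt (logDeriv r) 0 = 0 := by
    have h_pow : meromorphicOrderAt (fun z : ℂ ↦ z ^ (m + 1)) 0 = (m + 1 : ℕ) := by
      simpa using fun_meromorphicOrderAt_pow_id_sub_const (x := (0 : ℂ)) (n := m + 1)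
    rw [← h_pow, ← fun_meromorphicOrderAt_mul (by fun_prop) hr.logDeriv,
      meromorphicOrderAt_congr hlog, meromorphicOrderAt_const, if_neg ha]
  have h_le :=
    add_le_add_right (neg_one_le_meromorphicOrderAt_logDeriv hr) ((m + 1 : ℕ) : WithTop ℤ)
  rw [h_order] at h_le
  have h_int : (((m + 1 : ℕ) + -1 : ℤ) : WithTop ℤ) ≤ ((0 : ℤ) : WithTop ℤ) := h_le
  rw [WithTop.coe_le_coe] at h_int
  omega
end

section
/- For every function φ : ℂ → ℂ analytic at 0, there exists a function s : ℂ → ℂ analytic at 0 and a neighborhood U of 0 such that deriv s z − (s z)²/2 = −(φ z)² for all z ∈ U. (Local analytic solvability of the Riccati-type equation s' − s²/2 = −φ².) -/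
/-!
Write `φ² = ∑ bₙ zⁿ` and look for `s = ∑ aₙ zⁿ`. Comparing coefficients, the equation becomes the
recurrence `(n + 1) aₙ₊₁ = (∑_{k+l=n} aₖ aₗ) / 2 - bₙ`, which determines `a` from `a₀ = 0`.
If `2 ‖bₙ‖ ≤ Mⁿ⁺¹` with `M ≥ 1`, then `‖aₙ‖ ≤ Mⁿ` by strong induction (the convolution has `n + 1`
terms, which the factor `n + 1` absorbs), so the series for `s` converges near `0`. There `s'` and
`s²` are given by termwise differentiation and the Cauchy product, and the recurrence makes the
equation hold coefficient by coefficient.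
-/

open Finset FormalMultilinearSeries
open scoped ENNReal

section Recurrence

variable {K : Type*} [Field K]

noncomputable def riccatiCoeff (b : ℕ → K) : ℕ → K
  | 0 => 0
  | n + 1 =>
    ((∑ kl ∈ (antidiagonal n).attach, riccatiCoeff b kl.1.1 * riccatiCoeff b kl.1.2) / 2
      - b n) / (n + 1)
decreasing_by
  all_goals have := mem_antidiagonal.mp kl.2; omega

lemma riccatiCoeff_succ (b : ℕ → K) (n : ℕ) :
    riccatiCoeff b (n + 1) =
      ((∑ kl ∈ antidiagonal n, riccatiCoeff b kl.1 * riccatiCoeff b kl.2) / 2 - b n) /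
        (n + 1) := by
  rw [riccatiCoeff, ← sum_attach (antidiagonal n)]

lemma succ_mul_riccatiCoeff_succ [CharZero K] (b : ℕ → K) (n : ℕ) :
    (n + 1) * riccatiCoeff b (n + 1) =
      (∑ kl ∈ antidiagonal n, riccatiCoeff b kl.1 * riccatiCoeff b kl.2) / 2 - b n := by
  rw [riccatiCoeff_succ, mul_div_cancel₀ _ (Nat.cast_add_one_ne_zero n)]

end Recurrence

section Bounds

variable {𝕜 : Type*} [RCLike 𝕜]

lemma norm_sum_antidiagonal_mul_le_pow {a : ℕ → 𝕜} {M : ℝ} {n : ℕ} (hM : 0 ≤ M)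
    (ha : ∀ k ≤ n, ‖a k‖ ≤ M ^ k) :
    ‖∑ kl ∈ antidiagonal n, a kl.1 * a kl.2‖ ≤ (n + 1) * M ^ n := by
  calc ‖∑ kl ∈ antidiagonal n, a kl.1 * a kl.2‖
      ≤ ∑ kl ∈ antidiagonal n, ‖a kl.1‖ * ‖a kl.2‖ := by
        simpa only [norm_mul] using norm_sum_le (antidiagonal n) fun kl => a kl.1 * a kl.2
    _ ≤ ∑ kl ∈ antidiagonal n, M ^ n := by
        refine sum_le_sum fun kl hkl => ?_
        rw [← mem_antidiagonal.mp hkl, pow_add]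
        exact mul_le_mul (ha _ (HasAntidiagonal.antidiagonal.fst_le hkl))
          (ha _ (HasAntidiagonal.antidiagonal.snd_le hkl)) (norm_nonneg _) (pow_nonneg hM _)
    _ = (n + 1) * M ^ n := by simp [Nat.card_antidiagonal]

lemma norm_riccatiCoeff_le_pow {b : ℕ → 𝕜} {M : ℝ} (hM : 1 ≤ M)
    (hb : ∀ n, 2 * ‖b n‖ ≤ M ^ (n + 1)) (n : ℕ) : ‖riccatiCoeff b n‖ ≤ M ^ n := by
  induction n using Nat.strong_induction_on with
  | _ n ih =>
    rcases n with _ | n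
    · simp [riccatiCoeff]
    have hS := norm_sum_antidiagonal_mul_le_pow (zero_le_one.trans hM)
      fun k hk => ih k (Nat.lt_succ_of_le hk)
    have hMn : M ^ n ≤ M ^ (n + 1) := pow_le_pow_right₀ hM n.le_succ
    have hn : (1 : ℝ) ≤ n + 1 := by simp
    rw [riccatiCoeff_succ, norm_div, ← Nat.cast_succ, RCLike.norm_natCast, Nat.cast_succ,
      div_le_iff₀ (by positivity)]
    calc ‖(∑ kl ∈ antidiagonal n, riccatiCoeff b kl.1 * riccatiCoeff b kl.2) / 2 - b n‖
        ≤ ‖∑ kl ∈ antidiagonal n, riccatiCoeff b kl.1 * riccatiCoeff b kl.2‖ / 2 + ‖b n‖ := by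
          simpa [norm_div] using norm_sub_le
            ((∑ kl ∈ antidiagonal n, riccatiCoeff b kl.1 * riccatiCoeff b kl.2) / 2) (b n)
      _ ≤ M ^ (n + 1) * (n + 1) := by nlinarith [hb n, pow_nonneg (zero_le_one.trans hM) n]

end Bounds

section PowerSeries

variable {𝕜 : Type*} [NontriviallyNormedField 𝕜] {f : 𝕜 → 𝕜}
  {p : FormalMultilinearSeries 𝕜 𝕜 𝕜} {r : ℝ≥0∞} {y : 𝕜}

namespace HasFPowerSeriesOnBall

lemma hasSum_coeff_mul_pow (hf : HasFPowerSeriesOnBall f p 0 r)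
    (hy : y ∈ Metric.eball 0 r) :
    HasSum (fun n => p.coeff n * y ^ n) (f y) := by
  simpa [apply_eq_pow_smul_coeff, mul_comm] using hf.hasSum hy

lemma summable_norm_coeff_mul_pow (hf : HasFPowerSeriesOnBall f p 0 r)
    (hy : y ∈ Metric.eball 0 r) : Summable fun n => ‖p.coeff n * y ^ n‖ := by
  simpa [apply_eq_pow_smul_coeff, mul_comm] using
    p.summable_norm_apply (Metric.eball_subset_eball hf.r_le hy)

lemma hasSum_sq [CompleteSpace 𝕜] (hf : HasFPowerSeriesOnBall f p 0 r)
    (hy : y ∈ Metric.eball 0 r) :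
    HasSum (fun n => (∑ kl ∈ antidiagonal n, p.coeff kl.1 * p.coeff kl.2) * y ^ n) (f y ^ 2) := by
  have hsum := hf.summable_norm_coeff_mul_pow hy
  have h := (summable_norm_sum_mul_antidiagonal_of_summable_norm hsum hsum).of_norm.hasSum
  rw [← tsum_mul_tsum_eq_tsum_sum_antidiagonal_of_summable_norm hsum hsum,
    (hf.hasSum_coeff_mul_pow hy).tsum_eq, ← sq] at h
  convert h using 2 with n
  · rfl
  rw [sum_mul]
  refine sum_congr rfl fun kl hkl => ?_
  rw [← mem_antidiagonal.mp hkl, pow_add]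
  ring

lemma hasSum_deriv [CompleteSpace 𝕜] (hf : HasFPowerSeriesOnBall f p 0 r)
    (hy : y ∈ Metric.eball 0 r) :
    HasSum (fun n => (n + 1) * p.coeff (n + 1) * y ^ n) (deriv f y) := by
  have h := (hf.fderiv.hasSum hy).mapL (ContinuousLinearMap.apply 𝕜 𝕜 1)
  simpa [apply_eq_pow_smul_coeff, mul_comm] using h

lemma deriv_sub_sq_div_two_eq_neg [CompleteSpace 𝕜] {ψ : 𝕜 → 𝕜}
    {q : FormalMultilinearSeries 𝕜 𝕜 𝕜} (hf : HasFPowerSeriesOnBall f p 0 r)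
    (hψ : HasFPowerSeriesOnBall ψ q 0 r)
    (hrec : ∀ n : ℕ, (n + 1) * p.coeff (n + 1) =
      (∑ kl ∈ antidiagonal n, p.coeff kl.1 * p.coeff kl.2) / 2 - q.coeff n)
    (hy : y ∈ Metric.eball 0 r) :
    deriv f y - f y ^ 2 / 2 = -ψ y := by
  have h := ((hf.hasSum_deriv hy).sub ((hf.hasSum_sq hy).div_const 2)).add
    (hψ.hasSum_coeff_mul_pow hy)
  have hterm : ∀ n : ℕ, (n + 1) * p.coeff (n + 1) * y ^ n -
      (∑ kl ∈ antidiagonal n, p.coeff kl.1 * p.coeff kl.2) * y ^ n / 2 + q.coeff n * y ^ n =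
        0 :=
    fun n => by linear_combination y ^ n * hrec n
  simp only [hterm] at h
  linear_combination h.unique hasSum_zero

end HasFPowerSeriesOnBall

end PowerSeries

lemma FormalMultilinearSeries.radius_ofScalars_riccatiCoeff_pos {𝕜 : Type*} [RCLike 𝕜]
    {q : FormalMultilinearSeries 𝕜 𝕜 𝕜} (hq : 0 < q.radius) :
    0 < (ofScalars 𝕜 (riccatiCoeff q.coeff)).radius := by
  obtain ⟨C, ρ, -, hρ, hqC⟩ := q.le_mul_pow_of_radius_pos hq
  set M := max 1 (max ρ (2 * C))
  have hM : 1 ≤ M := le_max_left _ _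
  have hM0 : 0 < M := zero_lt_one.trans_le hM
  have hb (n : ℕ) : 2 * ‖q.coeff n‖ ≤ M ^ (n + 1) :=
    calc 2 * ‖q.coeff n‖ ≤ 2 * C * ρ ^ n := by
          rw [← norm_apply_eq_norm_coef, mul_assoc]
          exact mul_le_mul_of_nonneg_left (hqC n) two_pos.le
      _ ≤ M * M ^ n := by
          gcongr
          exacts [(le_max_right _ _).trans (le_max_right _ _),
            (le_max_left _ _).trans (le_max_right _ _)]
      _ = M ^ (n + 1) := (pow_succ' M n).symm
  have hle : (M⁻¹.toNNReal : ℝ≥0∞) ≤ (ofScalars 𝕜 (riccatiCoeff q.coeff)).radius := by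
    refine le_radius_of_bound _ 1 fun n => ?_
    rw [ofScalars_norm, Real.coe_toNNReal _ (by positivity), inv_pow, ← div_eq_mul_inv,
      div_le_one (pow_pos hM0 n)]
    exact norm_riccatiCoeff_le_pow hM hb n
  exact lt_of_lt_of_le (by simpa using hM0) hle

/-- Local analytic solvability of the Riccati-type equation `s' - s²/2 = -φ²`. -/
theorem riccati_local_analytic_solution (φ : ℂ → ℂ) (hφ : AnalyticAt ℂ φ 0) :
    ∃ s : ℂ → ℂ, AnalyticAt ℂ s 0 ∧ ∃ U ∈ nhds (0 : ℂ),
      ∀ z ∈ U, deriv s z - (s z) ^ 2 / 2 = -(φ z) ^ 2 := by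
  obtain ⟨q, r, hψ⟩ := hφ.pow 2
  set p := ofScalars ℂ (riccatiCoeff q.coeff)
  have hs : HasFPowerSeriesOnBall p.sum p 0 p.radius :=
    p.hasFPowerSeriesOnBall (radius_ofScalars_riccatiCoeff_pos hψ.radius_pos)
  have hrec (n : ℕ) : (n + 1) * p.coeff (n + 1) =
      (∑ kl ∈ antidiagonal n, p.coeff kl.1 * p.coeff kl.2) / 2 - q.coeff n := by
    simpa only [p, coeff_ofScalars] using succ_mul_riccatiCoeff_succ q.coeff n
  have hr : 0 < min p.radius r := lt_min hs.r_pos hψ.r_pos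
  refine ⟨p.sum, hs.analyticAt, _, Metric.eball_mem_nhds 0 hr, fun z hz => ?_⟩
  exact (hs.mono hr (min_le_left _ _)).deriv_sub_sq_div_two_eq_neg
    (hψ.mono hr (min_le_right _ _)) hrec hz
end
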